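/- Let A, B, a₁, a₃, c₁, c₂, c₃, c₄, b₂, b₃, d₂, d₃ ∈ ℂ with A·a₃·c₁·c₄ ≠ 0, let β₁,…,β₅ ∈ ℂ, and let g₁, g₂, g₃, g₄ : ℂ → ℂ be twice differentiable. Set C = −c₃(Bc₁ + Ac₄)/c₁², a₂ = a₁c₂(−Ba₃c₁² + a₁c₁c₃B + a₁c₃c₄A)/(Aa₃c₁²c₄), a₄ = a₁(−Ba₃c₁² + a₁c₁c₃B + a₁c₃c₄A)/(Aa₃c₁²), and define u : ℂ⁴ → ℂ (variables (x,y,z,t)) by u = β₁ + g₁(a₁x + a₂y + a₃z + a₄t + β₂) + g₂(b₂y + b₃z + β₃) + g₃(c₁x + c₂y + c₃z + c₄t + β₄) + g₄(d₂y + d₃z + β₅). Then u satisfies the asymmetric heavenly equation u_{tx}u_{ty} − u_{tt}u_{xy} + A·u_{tz} + B·u_{xz} + C·u_{xx} = 0 at every point; in particular, for B = 0 it satisfies the evolution form of the second heavenly equation u_{tx}u_{ty} − u_{tt}u_{xy} + A·u_{tz} + C·u_{xx} = 0. -/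

import Mathlib

/-- Partial derivative with respect to the first argument. -/
noncomputable def pd1 (f : ℂ → ℂ → ℂ → ℂ → ℂ) (a b c d : ℂ) : ℂ :=
  deriv (fun s => f s b c d) a

/-- Partial derivative with respect to the second argument. -/
noncomputable def pd2 (f : ℂ → ℂ → ℂ → ℂ → ℂ) (a b c d : ℂ) : ℂ :=
  deriv (fun s => f a s c d) b

/-- Partial derivative with respect to the third argument. -/
noncomputable def pd3 (f : ℂ → ℂ → ℂ → ℂ → ℂ) (a b c d : ℂ) : ℂ :=
  deriv (fun s => f a b s d) c

/-- Partial derivative with respect to the fourth argument. -/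
noncomputable def pd4 (f : ℂ → ℂ → ℂ → ℂ → ℂ) (a b c d : ℂ) : ℂ :=
  deriv (fun s => f a b c s) d

/-!
The ansatz is a superposition of plane waves `gᵢ(kⁱ · (x,y,z,t) + φᵢ)`. The Hessian of such a
wave is `gᵢ'' kⁱ (kⁱ)ᵀ`, so the linear part of the equation applied to it is `gᵢ''` times the
symbol `A k₃ k₄ + B k₁ k₃ + C k₁²` of `kⁱ`, while the quadratic part `u_tx u_ty − u_tt u_xy`, a
`2 × 2` minor of the Hessian, vanishes on each single wave. For two waves `i, j` the cross terms
of the minor add up to `gᵢ'' gⱼ'' (k₁ⁱk₄ʲ − k₄ⁱk₁ʲ)(k₄ⁱk₂ʲ − k₂ⁱk₄ʲ)`. Every term of the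
equation differentiates in `x` or `t`, on which `g₂, g₄` do not depend, and the values of `C`,
`a₄`, `a₂` are exactly those making the symbol vanish on `(c₁, c₂, c₃, c₄)` and
`(a₁, a₂, a₃, a₄)` and making `a₄ c₂ = a₂ c₄`.
-/

theorem deriv_comp_affine (g : ℂ → ℂ) {ψ : ℂ → ℂ} {m : ℂ} (hψ : ∀ s, ψ s = m * s + ψ 0)
    (x : ℂ) : deriv (fun s => g (ψ s)) x = m * deriv g (ψ x) := by
  have hcomp : (fun s => g (ψ s)) = fun s => (fun y => g (y + ψ 0)) (m * s) :=
    funext fun s => by rw [hψ s]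
  rw [hcomp, deriv_comp_mul_left m (fun y => g (y + ψ 0)), deriv_comp_add_const, ← hψ,
    smul_eq_mul]

noncomputable def planeWaveSum {ι : Type*} [Fintype ι] (β : ℂ) (g : ι → ℂ → ℂ)
    (k₁ k₂ k₃ k₄ φ : ι → ℂ) (x y z t : ℂ) : ℂ :=
  β + ∑ i, g i (k₁ i * x + k₂ i * y + k₃ i * z + k₄ i * t + φ i)

section PlaneWaveSum

variable {ι : Type*} [Fintype ι] {β : ℂ} {g : ι → ℂ → ℂ} {k₁ k₂ k₃ k₄ φ : ι → ℂ}

theorem pd1_planeWaveSum (hg : ∀ i, Differentiable ℂ (g i)) :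
    pd1 (planeWaveSum β g k₁ k₂ k₃ k₄ φ)
      = planeWaveSum 0 (fun i w => k₁ i * deriv (g i) w) k₁ k₂ k₃ k₄ φ := by
  funext x y z t
  simp only [pd1, planeWaveSum, deriv_const_add, zero_add]
  rw [deriv_fun_sum fun i _ => by fun_prop]
  exact Finset.sum_congr rfl fun i _ => deriv_comp_affine (g i) (fun s => by ring) x

theorem pd2_planeWaveSum (hg : ∀ i, Differentiable ℂ (g i)) :
    pd2 (planeWaveSum β g k₁ k₂ k₃ k₄ φ)
      = planeWaveSum 0 (fun i w => k₂ i * deriv (g i) w) k₁ k₂ k₃ k₄ φ := by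
  funext x y z t
  simp only [pd2, planeWaveSum, deriv_const_add, zero_add]
  rw [deriv_fun_sum fun i _ => by fun_prop]
  exact Finset.sum_congr rfl fun i _ => deriv_comp_affine (g i) (fun s => by ring) y

theorem pd3_planeWaveSum (hg : ∀ i, Differentiable ℂ (g i)) :
    pd3 (planeWaveSum β g k₁ k₂ k₃ k₄ φ)
      = planeWaveSum 0 (fun i w => k₃ i * deriv (g i) w) k₁ k₂ k₃ k₄ φ := by
  funext x y z t
  simp only [pd3, planeWaveSum, deriv_const_add, zero_add]
  rw [deriv_fun_sum fun i _ => by fun_prop]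
  exact Finset.sum_congr rfl fun i _ => deriv_comp_affine (g i) (fun s => by ring) z

theorem pd4_planeWaveSum (hg : ∀ i, Differentiable ℂ (g i)) :
    pd4 (planeWaveSum β g k₁ k₂ k₃ k₄ φ)
      = planeWaveSum 0 (fun i w => k₄ i * deriv (g i) w) k₁ k₂ k₃ k₄ φ := by
  funext x y z t
  simp only [pd4, planeWaveSum, deriv_const_add, zero_add]
  rw [deriv_fun_sum fun i _ => by fun_prop]
  exact Finset.sum_congr rfl fun i _ => deriv_comp_affine (g i) (fun s => by ring) t

end PlaneWaveSum

theorem sum_mul_sum_sub_sum_mul_sum_eq_zero {ι : Type*} [Fintype ι] {p k₁ k₂ k₄ : ι → ℂ}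
    (h : ∀ i j, (k₁ i * k₄ j - k₄ i * k₁ j) * (k₄ i * k₂ j - k₂ i * k₄ j) = 0) :
    (∑ i, k₄ i * (k₁ i * p i)) * (∑ j, k₄ j * (k₂ j * p j))
      - (∑ i, k₄ i * (k₄ i * p i)) * (∑ j, k₁ j * (k₂ j * p j)) = 0 := by
  set T : ι → ι → ℂ := fun i j => p i * p j * (k₄ i * k₂ j * (k₁ i * k₄ j - k₄ i * k₁ j))
  have hS : (∑ i, k₄ i * (k₁ i * p i)) * (∑ j, k₄ j * (k₂ j * p j))
      - (∑ i, k₄ i * (k₄ i * p i)) * (∑ j, k₁ j * (k₂ j * p j)) = ∑ i, ∑ j, T i j := by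
    simp only [Finset.sum_mul_sum, ← Finset.sum_sub_distrib, T]
    exact Finset.sum_congr rfl fun i _ => Finset.sum_congr rfl fun j _ => by ring
  have hT : ∀ i j, T i j + T j i = 0 := fun i j => by
    linear_combination p i * p j * h i j
  have h2 : 2 * ∑ i, ∑ j, T i j = 0 := by
    rw [two_mul]
    nth_rewrite 2 [Finset.sum_comm]
    simp only [← Finset.sum_add_distrib, hT, Finset.sum_const_zero]
  rw [hS]
  simpa using h2

noncomputable def asymmetricHeavenly (A B C : ℂ) (u : ℂ → ℂ → ℂ → ℂ → ℂ) (x y z t : ℂ) : ℂ :=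
  pd4 (pd1 u) x y z t * pd4 (pd2 u) x y z t - pd4 (pd4 u) x y z t * pd1 (pd2 u) x y z t
    + A * pd4 (pd3 u) x y z t + B * pd1 (pd3 u) x y z t + C * pd1 (pd1 u) x y z t

theorem asymmetricHeavenly_planeWaveSum_eq_zero {ι : Type*} [Fintype ι] {A B C β : ℂ}
    {g : ι → ℂ → ℂ} {k₁ k₂ k₃ k₄ φ : ι → ℂ} (hg : ∀ i, ContDiff ℂ 2 (g i))
    (hchar : ∀ i, A * k₃ i * k₄ i + B * k₁ i * k₃ i + C * k₁ i ^ 2 = 0)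
    (hpair : ∀ i j, (k₁ i * k₄ j - k₄ i * k₁ j) * (k₄ i * k₂ j - k₂ i * k₄ j) = 0)
    (x y z t : ℂ) :
    asymmetricHeavenly A B C (planeWaveSum β g k₁ k₂ k₃ k₄ φ) x y z t = 0 := by
  have hd : ∀ i, Differentiable ℂ (g i) := fun i => (hg i).differentiable (by norm_num)
  have hd' : ∀ (c : ι → ℂ) i, Differentiable ℂ (fun w => c i * deriv (g i) w) :=
    fun c i => (hg i).differentiable_deriv_two.const_mul (c i)
  simp only [asymmetricHeavenly, pd1_planeWaveSum, pd2_planeWaveSum, pd3_planeWaveSum,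
    pd4_planeWaveSum, hd, hd', implies_true]
  simp only [planeWaveSum, deriv_const_mul_field', zero_add]
  set p : ι → ℂ := fun i => deriv (deriv (g i)) (k₁ i * x + k₂ i * y + k₃ i * z + k₄ i * t + φ i)
  have hlin : A * ∑ i, k₄ i * (k₃ i * p i) + B * ∑ i, k₁ i * (k₃ i * p i)
      + C * ∑ i, k₁ i * (k₁ i * p i) = 0 := by
    simp only [Finset.mul_sum, ← Finset.sum_add_distrib]
    exact Finset.sum_eq_zero fun i _ => by linear_combination p i * hchar i
  linear_combination sum_mul_sum_sub_sum_mul_sum_eq_zero hpair + hlin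

/-- the functional ansatz solves the asymmetric heavenly equation,
and for `B = 0` the evolution form of the second heavenly equation. -/
theorem stmt18 (A B a₁ a₃ c₁ c₂ c₃ c₄ b₂ b₃ d₂ d₃ : ℂ)
    (hne : A * a₃ * c₁ * c₄ ≠ 0) (β₁ β₂ β₃ β₄ β₅ : ℂ)
    (g₁ g₂ g₃ g₄ : ℂ → ℂ)
    (hg₁ : ContDiff ℂ 2 g₁) (hg₂ : ContDiff ℂ 2 g₂)
    (hg₃ : ContDiff ℂ 2 g₃) (hg₄ : ContDiff ℂ 2 g₄)
    (C a₂ a₄ : ℂ)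
    (hC : C = -(c₃ * (B * c₁ + A * c₄)) / c₁ ^ 2)
    (ha₂ : a₂ = a₁ * c₂ * (-(B * a₃ * c₁ ^ 2) + a₁ * c₁ * c₃ * B + a₁ * c₃ * c₄ * A)
        / (A * a₃ * c₁ ^ 2 * c₄))
    (ha₄ : a₄ = a₁ * (-(B * a₃ * c₁ ^ 2) + a₁ * c₁ * c₃ * B + a₁ * c₃ * c₄ * A)
        / (A * a₃ * c₁ ^ 2))
    (u : ℂ → ℂ → ℂ → ℂ → ℂ)
    (hu : u = fun x y z t =>
      β₁ + g₁ (a₁ * x + a₂ * y + a₃ * z + a₄ * t + β₂)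
        + g₂ (b₂ * y + b₃ * z + β₃)
        + g₃ (c₁ * x + c₂ * y + c₃ * z + c₄ * t + β₄)
        + g₄ (d₂ * y + d₃ * z + β₅)) :
    (∀ x y z t : ℂ,
      pd4 (pd1 u) x y z t * pd4 (pd2 u) x y z t
        - pd4 (pd4 u) x y z t * pd1 (pd2 u) x y z t
        + A * pd4 (pd3 u) x y z t + B * pd1 (pd3 u) x y z t
        + C * pd1 (pd1 u) x y z t = 0)
    ∧ (B = 0 → ∀ x y z t : ℂ,
      pd4 (pd1 u) x y z t * pd4 (pd2 u) x y z t
        - pd4 (pd4 u) x y z t * pd1 (pd2 u) x y z t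
        + A * pd4 (pd3 u) x y z t + C * pd1 (pd1 u) x y z t = 0) := by
  simp only [mul_ne_zero_iff] at hne
  obtain ⟨⟨⟨hA, ha₃⟩, hc₁⟩, hc₄⟩ := hne
  have ha : A * a₃ * a₄ + B * a₁ * a₃ + C * a₁ ^ 2 = 0 := by
    rw [ha₄, hC]; field_simp; ring
  have hc : A * c₃ * c₄ + B * c₁ * c₃ + C * c₁ ^ 2 = 0 := by
    rw [hC]; field_simp; ring
  have hac : a₄ * c₂ - a₂ * c₄ = 0 := by
    rw [ha₂, ha₄]; field_simp; ring
  have hwaves : u = planeWaveSum β₁ ![g₁, g₂, g₃, g₄] ![a₁, 0, c₁, 0] ![a₂, b₂, c₂, d₂]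
      ![a₃, b₃, c₃, d₃] ![a₄, 0, c₄, 0] ![β₂, β₃, β₄, β₅] := by
    subst hu
    funext x y z t
    simp only [planeWaveSum, Fin.sum_univ_four, Matrix.cons_val_zero, Matrix.cons_val_one,
      Matrix.cons_val, zero_mul, zero_add, add_zero]
    ring
  have heq : ∀ x y z t, asymmetricHeavenly A B C u x y z t = 0 := by
    rw [hwaves]
    refine asymmetricHeavenly_planeWaveSum_eq_zero (fun i => ?_) (fun i => ?_) (fun i j => ?_)
    · fin_cases i <;> assumption
    · fin_cases i <;> simp [ha, hc]
    · fin_cases i <;> fin_cases j <;> dsimp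
      all_goals first | ring1 | linear_combination (a₁ * c₄ - a₄ * c₁) * hac
  exact ⟨heq, fun hB x y z t => by simpa [asymmetricHeavenly, hB] using heq x y z t⟩
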